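/- Let (β,δ) lie in the exponential regime ℰ and let 0 < K ≤ 1. Then, as N → ∞, the Green-function occupation sum Σ_{n=1}^{⌊K N^{1−δ}⌋} G_N(n,n) is logarithmically equivalent to exp( K(2−K) N^{1−β−2δ} ), i.e. log( Σ_{n=1}^{⌊K N^{1−δ}⌋} G_N(n,n) ) / ( K(2−K) N^{1−β−2δ} ) → 1. -/

import Mathlib

/-!
Write `m = N^{-β}`, `ε = N^{-δ}`, `x = k/N`. Clearing denominators,
`p_k/q_k = 1 + 2m(ε - x)/((1 - ε)(1 - x + 2m))`, which is `≥ 1` exactly while `k ≤ N^{1-δ}`.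
So for `M = ⌊K N^{1-δ}⌋` every product in `G_N(n,n)`, `n ≤ M`, is at most
`P = ∏_{k=1}^{M-1} p_k/q_k`, while `P/(M q_M)` is the `l = 0` term of `G_N(M,M)`: the sum lies
between `P/N²` and `N²P`. Since `log(1 + u) = u(1 + o(1))` uniformly here,
`log P ~ Σ_{k<M} 2m(ε - k/N) ~ K(2 - K) N^{1-β-2δ}`, which swamps the `2 log N` error.
-/

open Filter Finset

namespace MullerRatchet5

/-- Per-capita upward rate of the time-rescaled best-class process:
`p_n = (1/(2m) + 1/ρ)(1 − n/N)` with `m = N^{−β}`, `ρ = 1 − N^{−δ}`. -/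
noncomputable def pr (β δ : ℝ) (N n : ℕ) : ℝ :=
  (1 / (2 * (N:ℝ)^(-β)) + 1 / (1 - (N:ℝ)^(-δ))) * (1 - (n:ℝ)/(N:ℝ))

/-- Per-capita downward rate `q_n = (1/(2m))(1 − n/N) + 1` with `m = N^{−β}`. -/
noncomputable def qr (β : ℝ) (N n : ℕ) : ℝ :=
  (1 / (2 * (N:ℝ)^(-β))) * (1 - (n:ℝ)/(N:ℝ)) + 1

/-- Green function `G_N(n₀,n) = (1/(n q_n)) Σ_{l=0}^{min(n₀,n)−1} ∏_{k=l+1}^{n−1} p_k/q_k`. -/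
noncomputable def G (β δ : ℝ) (N n₀ n : ℕ) : ℝ :=
  (1 / ((n:ℝ) * qr β N n)) * ∑ l ∈ Finset.range (min n₀ n),
    ∏ k ∈ Finset.Icc (l+1) (n-1), pr β δ N k / qr β N k

open Topology

section Limits
variable {ι : Type*} {l : Filter ι}

theorem tendsto_div_of_mul_le_of_le_mul {L W T lo hi : ι → ℝ} {c : ℝ}
    (hlo : Tendsto lo l (𝓝 1)) (hhi : Tendsto hi l (𝓝 1))
    (hW : Tendsto (fun i => W i / T i) l (𝓝 c)) (hT : ∀ᶠ i in l, 0 < T i)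
    (hL : ∀ᶠ i in l, lo i * W i ≤ L i ∧ L i ≤ hi i * W i) :
    Tendsto (fun i => L i / T i) l (𝓝 c) := by
  have hlow : Tendsto (fun i => lo i * (W i / T i)) l (𝓝 c) := by simpa using hlo.mul hW
  have hhigh : Tendsto (fun i => hi i * (W i / T i)) l (𝓝 c) := by simpa using hhi.mul hW
  refine tendsto_of_tendsto_of_tendsto_of_le_of_le' hlow hhigh ?_ ?_ <;>
    filter_upwards [hT, hL] with i hTi hLi <;> rw [← mul_div_assoc]
  · exact div_le_div_of_nonneg_right hLi.1 hTi.le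
  · exact div_le_div_of_nonneg_right hLi.2 hTi.le

theorem tendsto_div_of_abs_sub_le {f g h T : ι → ℝ} {c : ℝ}
    (hf : Tendsto (fun i => f i / T i) l (𝓝 c)) (hh : Tendsto (fun i => h i / T i) l (𝓝 0))
    (hT : ∀ᶠ i in l, 0 < T i) (hfg : ∀ᶠ i in l, |g i - f i| ≤ h i) :
    Tendsto (fun i => g i / T i) l (𝓝 c) := by
  have hdiff : Tendsto (fun i => (g i - f i) / T i) l (𝓝 0) := by
    refine squeeze_zero_norm' ?_ hh
    filter_upwards [hT, hfg] with i hTi hi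
    rw [Real.norm_eq_abs, abs_div, abs_of_pos hTi]
    exact div_le_div_of_nonneg_right hi hTi.le
  simpa using (hf.add hdiff).congr fun i => by ring

end Limits

theorem abs_log_sub_log_le {S P c : ℝ} (hP : 0 < P) (hc : 0 < c) (hlo : P / c ≤ S)
    (hhi : S ≤ c * P) : |Real.log S - Real.log P| ≤ Real.log c := by
  have h1 := Real.log_le_log (div_pos hP hc) hlo
  have h2 := Real.log_le_log ((div_pos hP hc).trans_le hlo) hhi
  rw [Real.log_div hP.ne' hc.ne'] at h1
  rw [Real.log_mul hc.ne' hP.ne'] at h2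
  rw [abs_sub_le_iff]
  constructor <;> linarith

theorem sum_Icc_one_natCast_mul_two (n : ℕ) :
    (∑ k ∈ Icc 1 n, (k : ℝ)) * 2 = n * (n + 1) := by
  induction n with
  | zero => simp
  | succ n ih =>
    rw [sum_Icc_succ_top (by omega : 1 ≤ n + 1), add_mul, ih]
    push_cast
    ring

section RateRatio
variable {a e x : ℝ}

theorem rate_ratio_eq (ha : 0 < a) (he : e < 1) (hx : x < 1) :
    (1 / (2 * a) + 1 / (1 - e)) * (1 - x) / (1 / (2 * a) * (1 - x) + 1)
      = 1 + 2 * a * (e - x) / ((1 - e) * (1 - x + 2 * a)) := by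
  have he' : 1 - e ≠ 0 := by linarith
  have hx' : 1 - x + 2 * a ≠ 0 := by linarith
  field_simp
  ring

theorem log_one_add_rate_excess_le (ha : 0 < a) (hxe : x ≤ e) (he : e < 1) :
    Real.log (1 + 2 * a * (e - x) / ((1 - e) * (1 - x + 2 * a)))
      ≤ 2 * a * (e - x) / (1 - e) ^ 2 := by
  set u := 2 * a * (e - x) / ((1 - e) * (1 - x + 2 * a))
  have hden : 0 < (1 - e) * (1 - x + 2 * a) := by nlinarith
  have hu0 : 0 ≤ u := div_nonneg (by nlinarith) hden.le
  calc Real.log (1 + u) ≤ u := by linarith [Real.log_le_sub_one_of_pos (by linarith : 0 < 1 + u)]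
    _ ≤ 2 * a * (e - x) / (1 - e) ^ 2 :=
        div_le_div_of_nonneg_left (by nlinarith) (by nlinarith)
          (by rw [sq]; exact mul_le_mul_of_nonneg_left (by linarith) (by linarith))

theorem le_log_one_add_rate_excess (ha : 0 < a) (hx : 0 ≤ x) (hxe : x ≤ e) (he : e < 1) :
    2 * a * (e - x) / ((1 + 2 * a) * (1 + 2 * a * e / (1 - e) ^ 2))
      ≤ Real.log (1 + 2 * a * (e - x) / ((1 - e) * (1 - x + 2 * a))) := by
  set u := 2 * a * (e - x) / ((1 - e) * (1 - x + 2 * a))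
  have hden : 0 < (1 - e) * (1 - x + 2 * a) := by nlinarith
  have hu0 : 0 ≤ u := div_nonneg (by nlinarith) hden.le
  have hu_lo : 2 * a * (e - x) / (1 + 2 * a) ≤ u :=
    div_le_div_of_nonneg_left (by nlinarith) hden (by nlinarith)
  have hu_hi : u ≤ 2 * a * e / (1 - e) ^ 2 :=
    div_le_div₀ (by nlinarith) (by nlinarith) (by nlinarith)
      (by rw [sq]; exact mul_le_mul_of_nonneg_left (by linarith) (by linarith))
  calc 2 * a * (e - x) / ((1 + 2 * a) * (1 + 2 * a * e / (1 - e) ^ 2))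
      = 2 * a * (e - x) / (1 + 2 * a) / (1 + 2 * a * e / (1 - e) ^ 2) := by rw [div_div]
    _ ≤ u / (1 + u) := div_le_div₀ hu0 hu_lo (by linarith) (by linarith)
    _ = 1 - (1 + u)⁻¹ := by field_simp; ring
    _ ≤ Real.log (1 + u) := Real.one_sub_inv_le_log_of_pos (by linarith)

end RateRatio

section Rates
variable {β δ : ℝ} {N k : ℕ}

theorem pr_div_qr_eq (hN : 0 < N) (he : (N : ℝ) ^ (-δ) < 1) (hk : (k : ℝ) / N < 1) :
    pr β δ N k / qr β N k = 1 + 2 * (N : ℝ) ^ (-β) * ((N : ℝ) ^ (-δ) - k / N)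
      / ((1 - (N : ℝ) ^ (-δ)) * (1 - k / N + 2 * (N : ℝ) ^ (-β))) :=
  rate_ratio_eq (Real.rpow_pos_of_pos (Nat.cast_pos.2 hN) _) he hk

theorem one_le_pr_div_qr (hN : 0 < N) (he : (N : ℝ) ^ (-δ) < 1)
    (hk : (k : ℝ) / N ≤ (N : ℝ) ^ (-δ)) : 1 ≤ pr β δ N k / qr β N k := by
  rw [pr_div_qr_eq hN he (hk.trans_lt he)]
  have ha : 0 < (N : ℝ) ^ (-β) := Real.rpow_pos_of_pos (Nat.cast_pos.2 hN) _
  exact le_add_of_nonneg_right (div_nonneg (by nlinarith) (by nlinarith))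

theorem one_le_qr (hk : k ≤ N) : 1 ≤ qr β N k := by
  have hx : (k : ℝ) / N ≤ 1 := div_le_one_of_le₀ (by exact_mod_cast hk) (Nat.cast_nonneg N)
  exact le_add_of_nonneg_left (mul_nonneg (by positivity) (by linarith))

theorem qr_le_self (hβ : β ≤ 1) (hN : 2 ≤ N) : qr β N k ≤ N := by
  have hN' : (2 : ℝ) ≤ N := by exact_mod_cast hN
  have hm : 1 / (2 * (N : ℝ) ^ (-β)) = (N : ℝ) ^ β / 2 := by
    rw [Real.rpow_neg (by positivity)]
    field_simp
  have hNβ : (N : ℝ) ^ β ≤ N := Real.rpow_le_self_of_one_le (by linarith) hβ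
  have hx : 0 ≤ (k : ℝ) / N := by positivity
  unfold qr
  rw [hm]
  nlinarith [Real.rpow_nonneg (Nat.cast_nonneg N) β]

end Rates

noncomputable def ratioProd (β δ : ℝ) (N M : ℕ) : ℝ :=
  ∏ k ∈ Icc 1 (M - 1), pr β δ N k / qr β N k

noncomputable def logRatioProdApprox (β δ : ℝ) (N M : ℕ) : ℝ :=
  ∑ k ∈ Icc 1 (M - 1), 2 * (N : ℝ) ^ (-β) * ((N : ℝ) ^ (-δ) - k / N)

section Products
variable {β δ : ℝ} {N M n : ℕ}

theorem lt_of_natCast_div_lt_one (hN : 0 < N) (hM : (M : ℝ) / N < 1) : M < N := by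
  rw [div_lt_one (by exact_mod_cast hN)] at hM
  exact_mod_cast hM

theorem natCast_div_le_of_le (hM : (M : ℝ) / N ≤ (N : ℝ) ^ (-δ)) {k : ℕ} (hk : k ≤ M) :
    (k : ℝ) / N ≤ (N : ℝ) ^ (-δ) :=
  (div_le_div_of_nonneg_right (by exact_mod_cast hk) (Nat.cast_nonneg N)).trans hM

theorem one_le_pr_div_qr_of_le (hN : 0 < N) (he : (N : ℝ) ^ (-δ) < 1)
    (hM : (M : ℝ) / N ≤ (N : ℝ) ^ (-δ)) {k : ℕ} (hk : k ≤ M) : 1 ≤ pr β δ N k / qr β N k :=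
  one_le_pr_div_qr hN he (natCast_div_le_of_le hM hk)

theorem one_le_prod_Icc (hN : 0 < N) (he : (N : ℝ) ^ (-δ) < 1)
    (hM : (M : ℝ) / N ≤ (N : ℝ) ^ (-δ)) (hn : n ≤ M) (l : ℕ) :
    1 ≤ ∏ k ∈ Icc l (n - 1), pr β δ N k / qr β N k :=
  one_le_prod fun _ hk => one_le_pr_div_qr_of_le hN he hM (by rw [mem_Icc] at hk; omega)

theorem prod_Icc_le_ratioProd (hN : 0 < N) (he : (N : ℝ) ^ (-δ) < 1)
    (hM : (M : ℝ) / N ≤ (N : ℝ) ^ (-δ)) (hn : n ≤ M) (l : ℕ) :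
    ∏ k ∈ Icc (l + 1) (n - 1), pr β δ N k / qr β N k ≤ ratioProd β δ N M :=
  prod_le_prod_of_subset_of_one_le (Icc_subset_Icc (by omega) (by omega))
    (fun _ hk => zero_le_one.trans
      (one_le_pr_div_qr_of_le hN he hM (by rw [mem_Icc] at hk; omega)))
    (fun _ hk _ => one_le_pr_div_qr_of_le hN he hM (by rw [mem_Icc] at hk; omega))

theorem G_self_nonneg (hN : 0 < N) (he : (N : ℝ) ^ (-δ) < 1)
    (hM : (M : ℝ) / N ≤ (N : ℝ) ^ (-δ)) (hn : n ≤ M) : 0 ≤ G β δ N n n := by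
  have hq : 1 ≤ qr β N n := one_le_qr (hn.trans (lt_of_natCast_div_lt_one hN (hM.trans_lt he)).le)
  exact mul_nonneg (one_div_nonneg.2 (mul_nonneg (Nat.cast_nonneg n) (by linarith)))
    (sum_nonneg fun l _ => zero_le_one.trans (one_le_prod_Icc hN he hM hn (l + 1)))

theorem G_self_le_ratioProd (hN : 0 < N) (he : (N : ℝ) ^ (-δ) < 1)
    (hM : (M : ℝ) / N ≤ (N : ℝ) ^ (-δ)) (h1n : 1 ≤ n) (hn : n ≤ M) :
    G β δ N n n ≤ ratioProd β δ N M := by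
  have hq : 1 ≤ qr β N n := one_le_qr (hn.trans (lt_of_natCast_div_lt_one hN (hM.trans_lt he)).le)
  have hn' : (0 : ℝ) < n := by exact_mod_cast h1n
  have hP : 0 ≤ ratioProd β δ N M := zero_le_one.trans (one_le_prod_Icc hN he hM le_rfl 1)
  have hsum : ∑ l ∈ range (min n n), ∏ k ∈ Icc (l + 1) (n - 1), pr β δ N k / qr β N k
      ≤ n * ratioProd β δ N M :=
    (sum_le_sum fun l _ => prod_Icc_le_ratioProd hN he hM hn l).trans_eq
      (by rw [min_self, sum_const, card_range, nsmul_eq_mul])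
  calc G β δ N n n ≤ 1 / (n * qr β N n) * (n * ratioProd β δ N M) :=
        mul_le_mul_of_nonneg_left hsum (one_div_nonneg.2 (by positivity))
    _ = ratioProd β δ N M / qr β N n := by field_simp
    _ ≤ ratioProd β δ N M := div_le_self hP hq

theorem ratioProd_div_le_G_self (hN : 0 < N) (he : (N : ℝ) ^ (-δ) < 1)
    (hM : (M : ℝ) / N ≤ (N : ℝ) ^ (-δ)) (h1M : 1 ≤ M) :
    ratioProd β δ N M / (M * qr β N M) ≤ G β δ N M M := by
  have hq : 1 ≤ qr β N M := one_le_qr (lt_of_natCast_div_lt_one hN (hM.trans_lt he)).le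
  rw [div_eq_inv_mul, ← one_div]
  refine mul_le_mul_of_nonneg_left ?_ (one_div_nonneg.2 (by positivity))
  rw [min_self]
  exact single_le_sum (f := fun l => ∏ k ∈ Icc (l + 1) (M - 1), pr β δ N k / qr β N k)
    (fun l _ => zero_le_one.trans (one_le_prod_Icc hN he hM le_rfl (l + 1)))
    (mem_range.2 h1M)

theorem abs_log_sum_G_self_sub_log_ratioProd_le (hβ : β ≤ 1) (hN : 2 ≤ N)
    (he : (N : ℝ) ^ (-δ) < 1) (hM : (M : ℝ) / N ≤ (N : ℝ) ^ (-δ)) (h1M : 1 ≤ M) :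
    |Real.log (∑ n ∈ Icc 1 M, G β δ N n n) - Real.log (ratioProd β δ N M)|
      ≤ 2 * Real.log N := by
  have hN0 : 0 < N := by omega
  have hMN : (M : ℝ) ≤ N := by exact_mod_cast (lt_of_natCast_div_lt_one hN0 (hM.trans_lt he)).le
  have hq : 1 ≤ qr β N M := one_le_qr (lt_of_natCast_div_lt_one hN0 (hM.trans_lt he)).le
  have hP : 0 < ratioProd β δ N M := one_pos.trans_le (one_le_prod_Icc hN0 he hM le_rfl 1)
  have hN2 : (M : ℝ) ≤ (N : ℝ) ^ 2 := hMN.trans (le_self_pow₀ (by exact_mod_cast hN0) two_ne_zero)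
  have hlo : ratioProd β δ N M / (N : ℝ) ^ 2 ≤ ∑ n ∈ Icc 1 M, G β δ N n n :=
    calc ratioProd β δ N M / (N : ℝ) ^ 2 ≤ ratioProd β δ N M / (M * qr β N M) := by
          refine div_le_div_of_nonneg_left hP.le (mul_pos (by exact_mod_cast h1M) (by linarith)) ?_
          rw [sq]
          exact mul_le_mul hMN (qr_le_self hβ hN) (by linarith) (Nat.cast_nonneg N)
      _ ≤ G β δ N M M := ratioProd_div_le_G_self hN0 he hM h1M
      _ ≤ ∑ n ∈ Icc 1 M, G β δ N n n :=
          single_le_sum (fun n hn => G_self_nonneg hN0 he hM (mem_Icc.1 hn).2)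
            (mem_Icc.2 ⟨h1M, le_rfl⟩)
  have hhi : ∑ n ∈ Icc 1 M, G β δ N n n ≤ (N : ℝ) ^ 2 * ratioProd β δ N M :=
    calc ∑ n ∈ Icc 1 M, G β δ N n n ≤ ∑ _n ∈ Icc 1 M, ratioProd β δ N M :=
          sum_le_sum fun n hn => G_self_le_ratioProd hN0 he hM (mem_Icc.1 hn).1 (mem_Icc.1 hn).2
      _ = M * ratioProd β δ N M := by simp
      _ ≤ (N : ℝ) ^ 2 * ratioProd β δ N M := mul_le_mul_of_nonneg_right hN2 hP.le
  simpa [Real.log_pow] using abs_log_sub_log_le hP (by positivity) hlo hhi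

theorem log_ratioProd_le (hN : 0 < N) (he : (N : ℝ) ^ (-δ) < 1)
    (hM : (M : ℝ) / N ≤ (N : ℝ) ^ (-δ)) :
    Real.log (ratioProd β δ N M) ≤ 1 / (1 - (N : ℝ) ^ (-δ)) ^ 2 * logRatioProdApprox β δ N M := by
  rw [ratioProd, logRatioProdApprox, Real.log_prod fun k hk =>
    (one_pos.trans_le (one_le_pr_div_qr_of_le hN he hM (by rw [mem_Icc] at hk; omega))).ne',
    mul_sum]
  refine sum_le_sum fun k hk => ?_
  have hx := natCast_div_le_of_le hM (by rw [mem_Icc] at hk; omega : k ≤ M)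
  rw [pr_div_qr_eq hN he (hx.trans_lt he)]
  exact (log_one_add_rate_excess_le (Real.rpow_pos_of_pos (Nat.cast_pos.2 hN) _) hx he).trans_eq
    (by ring)

theorem le_log_ratioProd (hN : 0 < N) (he : (N : ℝ) ^ (-δ) < 1)
    (hM : (M : ℝ) / N ≤ (N : ℝ) ^ (-δ)) :
    1 / ((1 + 2 * (N : ℝ) ^ (-β)) * (1 + 2 * (N : ℝ) ^ (-β) * (N : ℝ) ^ (-δ)
        / (1 - (N : ℝ) ^ (-δ)) ^ 2)) * logRatioProdApprox β δ N M
      ≤ Real.log (ratioProd β δ N M) := by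
  rw [ratioProd, logRatioProdApprox, Real.log_prod fun k hk =>
    (one_pos.trans_le (one_le_pr_div_qr_of_le hN he hM (by rw [mem_Icc] at hk; omega))).ne',
    mul_sum]
  refine sum_le_sum fun k hk => ?_
  have hx := natCast_div_le_of_le hM (by rw [mem_Icc] at hk; omega : k ≤ M)
  rw [pr_div_qr_eq hN he (hx.trans_lt he)]
  exact (le_log_one_add_rate_excess (Real.rpow_pos_of_pos (Nat.cast_pos.2 hN) _)
    (by positivity) hx he).trans_eq' (by ring)

end Products

section Asymptotics
variable {β δ K : ℝ}

theorem tendsto_rpow_neg_natCast {r : ℝ} (hr : 0 < r) :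
    Tendsto (fun N : ℕ => (N : ℝ) ^ (-r)) atTop (𝓝 0) :=
  (tendsto_rpow_neg_atTop hr).comp tendsto_natCast_atTop_atTop

theorem tendsto_rpow_natCast_atTop {r : ℝ} (hr : 0 < r) :
    Tendsto (fun N : ℕ => (N : ℝ) ^ r) atTop atTop :=
  (tendsto_rpow_atTop hr).comp tendsto_natCast_atTop_atTop

theorem tendsto_log_natCast_div_rpow {r : ℝ} (hr : 0 < r) :
    Tendsto (fun N : ℕ => Real.log N / (N : ℝ) ^ r) atTop (𝓝 0) :=
  (isLittleO_log_rpow_atTop hr).tendsto_div_nhds_zero.comp tendsto_natCast_atTop_atTop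

theorem rpow_one_sub_div_self {N : ℕ} (hN : 0 < N) (r : ℝ) :
    (N : ℝ) ^ (1 - r) / N = (N : ℝ) ^ (-r) := by
  rw [← Real.rpow_sub_one (by exact_mod_cast hN.ne')]
  ring_nf

theorem natCast_floor_div_le (hK0 : 0 ≤ K) (hK1 : K ≤ 1) {N : ℕ} (hN : 0 < N) :
    (⌊K * (N : ℝ) ^ (1 - δ)⌋₊ : ℝ) / N ≤ (N : ℝ) ^ (-δ) := by
  rw [← rpow_one_sub_div_self hN]
  refine div_le_div_of_nonneg_right ((Nat.floor_le (by positivity)).trans ?_) (Nat.cast_nonneg N)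
  exact mul_le_of_le_one_left (by positivity) hK1

theorem eventually_one_le_floor (hδ1 : δ < 1) (hK0 : 0 < K) :
    ∀ᶠ N : ℕ in atTop, 1 ≤ ⌊K * (N : ℝ) ^ (1 - δ)⌋₊ :=
  (tendsto_nat_floor_atTop.comp ((tendsto_rpow_natCast_atTop (by linarith)).const_mul_atTop
    hK0)).eventually_ge_atTop 1

theorem logRatioProdApprox_div_eq {N M : ℕ} (hN : 0 < N) (h1M : 1 ≤ M) :
    logRatioProdApprox β δ N M / (N : ℝ) ^ (1 - β - 2 * δ)
      = 2 * ((M - 1) / (N : ℝ) ^ (1 - δ))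
          - (M - 1) / (N : ℝ) ^ (1 - δ) * (M / (N : ℝ) ^ (1 - δ)) := by
  have hN' : (0 : ℝ) < N := by exact_mod_cast hN
  have hT : (N : ℝ) ^ (1 - β - 2 * δ) = (N : ℝ) ^ (-β) * ((N : ℝ) ^ (1 - δ)) ^ 2 / N := by
    rw [← Real.rpow_natCast, ← Real.rpow_mul hN'.le, ← Real.rpow_add hN',
      ← Real.rpow_sub_one hN'.ne']
    ring_nf
  have hgauss := sum_Icc_one_natCast_mul_two (M - 1)
  rw [Nat.cast_sub h1M, Nat.cast_one, sub_add_cancel] at hgauss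
  rw [logRatioProdApprox, ← mul_sum, sum_sub_distrib, ← sum_div, sum_const, Nat.card_Icc,
    Nat.add_sub_cancel, nsmul_eq_mul, Nat.cast_sub h1M, Nat.cast_one, hT,
    ← rpow_one_sub_div_self hN δ, eq_div_of_mul_eq two_ne_zero hgauss]
  have : (N : ℝ) ^ (-β) ≠ 0 := (Real.rpow_pos_of_pos hN' _).ne'
  have : (N : ℝ) ^ (1 - δ) ≠ 0 := (Real.rpow_pos_of_pos hN' _).ne'
  field_simp

theorem tendsto_logRatioProdApprox_div (hδ1 : δ < 1) (hK0 : 0 < K) :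
    Tendsto (fun N : ℕ => logRatioProdApprox β δ N ⌊K * (N : ℝ) ^ (1 - δ)⌋₊
        / (N : ℝ) ^ (1 - β - 2 * δ)) atTop (𝓝 (K * (2 - K))) := by
  have hs := tendsto_rpow_natCast_atTop (show 0 < 1 - δ by linarith)
  have hφ : Tendsto (fun N : ℕ => (⌊K * (N : ℝ) ^ (1 - δ)⌋₊ : ℝ) / (N : ℝ) ^ (1 - δ))
      atTop (𝓝 K) := (tendsto_nat_floor_mul_div_atTop hK0.le).comp hs
  have hψ : Tendsto (fun N : ℕ => ((⌊K * (N : ℝ) ^ (1 - δ)⌋₊ : ℝ) - 1) / (N : ℝ) ^ (1 - δ))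
      atTop (𝓝 K) := by
    simpa [sub_div] using hφ.sub (tendsto_inv_atTop_zero.comp hs)
  have hlim := (hψ.const_mul 2).sub (hψ.mul hφ)
  rw [show 2 * K - K * K = K * (2 - K) by ring] at hlim
  refine hlim.congr' ?_
  filter_upwards [eventually_gt_atTop 0, eventually_one_le_floor hδ1 hK0] with N hN h1M
  exact (logRatioProdApprox_div_eq hN h1M).symm

theorem eventually_rpow_natCast_pos (r : ℝ) : ∀ᶠ N : ℕ in atTop, 0 < (N : ℝ) ^ r := by
  filter_upwards [eventually_gt_atTop 0] with N hN
  exact Real.rpow_pos_of_pos (by exact_mod_cast hN) r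

theorem rpow_neg_lt_one (hδ0 : 0 < δ) {N : ℕ} (hN : 2 ≤ N) : (N : ℝ) ^ (-δ) < 1 :=
  Real.rpow_lt_one_of_one_lt_of_neg (by exact_mod_cast hN) (neg_lt_zero.2 hδ0)

theorem tendsto_log_ratioProd_div (hβ0 : 0 < β) (hδ0 : 0 < δ) (hδ1 : δ < 1) (hK0 : 0 < K)
    (hK1 : K ≤ 1) :
    Tendsto (fun N : ℕ => Real.log (ratioProd β δ N ⌊K * (N : ℝ) ^ (1 - δ)⌋₊)
        / (N : ℝ) ^ (1 - β - 2 * δ)) atTop (𝓝 (K * (2 - K))) := by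
  have ha := tendsto_rpow_neg_natCast hβ0
  have he := tendsto_rpow_neg_natCast hδ0
  have h1 : Tendsto (fun _ : ℕ => (1 : ℝ)) atTop (𝓝 1) := tendsto_const_nhds
  have hlo : Tendsto (fun N : ℕ => 1 / ((1 + 2 * (N : ℝ) ^ (-β)) *
      (1 + 2 * (N : ℝ) ^ (-β) * (N : ℝ) ^ (-δ) / (1 - (N : ℝ) ^ (-δ)) ^ 2))) atTop (𝓝 1) := by
    convert h1.div ((h1.add (ha.const_mul 2)).mul
      (h1.add (((ha.const_mul 2).mul he).div ((h1.sub he).pow 2) (by norm_num)))) (by norm_num)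
      using 2 <;> norm_num
  have hhi : Tendsto (fun N : ℕ => 1 / (1 - (N : ℝ) ^ (-δ)) ^ 2) atTop (𝓝 1) := by
    convert h1.div ((h1.sub he).pow 2) (by norm_num) using 2 <;> norm_num
  refine tendsto_div_of_mul_le_of_le_mul hlo hhi (tendsto_logRatioProdApprox_div hδ1 hK0)
    (eventually_rpow_natCast_pos _) ?_
  filter_upwards [eventually_ge_atTop 2] with N hN
  have hN0 : 0 < N := by omega
  have hM := natCast_floor_div_le (δ := δ) hK0.le hK1 hN0
  exact ⟨le_log_ratioProd hN0 (rpow_neg_lt_one hδ0 hN) hM,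
    log_ratioProd_le hN0 (rpow_neg_lt_one hδ0 hN) hM⟩

theorem tendsto_log_sum_G_self_div (hβ0 : 0 < β) (hδ0 : 0 < δ) (hδ1 : δ < (1 - β) / 2)
    (hK0 : 0 < K) (hK1 : K ≤ 1) :
    Tendsto (fun N : ℕ => Real.log (∑ n ∈ Icc 1 ⌊K * (N : ℝ) ^ (1 - δ)⌋₊, G β δ N n n)
        / (N : ℝ) ^ (1 - β - 2 * δ)) atTop (𝓝 (K * (2 - K))) := by
  have hlog : Tendsto (fun N : ℕ => 2 * Real.log N / (N : ℝ) ^ (1 - β - 2 * δ))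
      atTop (𝓝 0) := by
    simpa [mul_div_assoc] using (tendsto_log_natCast_div_rpow (by linarith)).const_mul 2
  refine tendsto_div_of_abs_sub_le (tendsto_log_ratioProd_div hβ0 hδ0 (by linarith) hK0 hK1)
    hlog (eventually_rpow_natCast_pos _) ?_
  filter_upwards [eventually_ge_atTop 2, eventually_one_le_floor (δ := δ) (by linarith) hK0]
    with N hN h1M
  exact abs_log_sum_G_self_sub_log_ratioProd_le (by linarith) hN (rpow_neg_lt_one hδ0 hN)
    (natCast_floor_div_le hK0.le hK1 (by omega)) h1M

end Asymptotics

theorem statement5_general (β δ K : ℝ)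
    (hβ0 : 0 < β)
    (hδ0 : 0 < δ) (hδ1 : δ < (1 - β)/2)
    (hK0 : 0 < K) (hK1 : K ≤ 1) :
    Tendsto (fun N : ℕ =>
        Real.log (∑ n ∈ Finset.Icc 1 ⌊K * (N:ℝ)^(1 - δ)⌋₊, G β δ N n n) /
          (K * (2 - K) * (N:ℝ)^(1 - β - 2*δ)))
      atTop (nhds 1) := by
  have hC : K * (2 - K) ≠ 0 := (mul_pos hK0 (by linarith)).ne'
  have h := (tendsto_log_sum_G_self_div hβ0 hδ0 hδ1 hK0 hK1).div_const (K * (2 - K))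
  rw [div_self hC] at h
  exact h.congr fun N => by rw [div_div, mul_comm ((N : ℝ) ^ (1 - β - 2 * δ))]

/-- In the exponential regime `ℰ`, for `0 < K ≤ 1`,
`Σ_{n=1}^{⌊K N^{1−δ}⌋} G_N(n,n)` is logarithmically equivalent to
`exp(K(2−K) N^{1−β−2δ})`. -/
theorem statement5 (β δ K : ℝ)
    (hβ0 : 0 < β) (hβ1 : β < 1)
    (hδ0 : 0 < δ) (hδ1 : δ < (1 - β)/2)
    (hK0 : 0 < K) (hK1 : K ≤ 1) :
    Tendsto (fun N : ℕ =>
        Real.log (∑ n ∈ Finset.Icc 1 ⌊K * (N:ℝ)^(1 - δ)⌋₊, G β δ N n n) /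
          (K * (2 - K) * (N:ℝ)^(1 - β - 2*δ)))
      atTop (nhds 1) :=
  statement5_general β δ K hβ0 hδ0 hδ1 hK0 hK1

end MullerRatchet5
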